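/- arXiv:1404.0541 — 3 statements merged into one kernel-verified Lean document; each statement's English description precedes it below -/
import Mathlib

section
/- Let n, p be positive integers, let Y ∈ ℝ^n, X ∈ ℝ^{n×p}, β* ∈ ℝ^p, σ > 0 and ε ∈ ℝ^n satisfy Y = Xβ* + σε, and let λ > 0 satisfy λ ≥ 2σ‖Xᵀε‖_∞/n. Then every global minimizer β̂ of the Lasso objective β ↦ ‖Y − Xβ‖₂²/n + λ‖β‖₁ over ℝ^p satisfies the prediction bound ‖Xβ̂ − Xβ*‖₂²/n ≤ 2λ‖β*‖₁. -/
open Matrix Finset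

/-- Lemma 1 of the paper: in the linear model `Y = Xβ* + σε`, if the tuning parameter
satisfies `λ ≥ 2σ‖Xᵀε‖_∞/n`, then every global minimizer `β̂` of the Lasso objective
`β ↦ ‖Y − Xβ‖₂²/n + λ‖β‖₁` satisfies the prediction bound
`‖Xβ̂ − Xβ*‖₂²/n ≤ 2λ‖β*‖₁`. -/
theorem lasso_prediction_bound
    (n p : ℕ) (hn : 0 < n) (hp : 0 < p)
    (Y : Fin n → ℝ) (X : Matrix (Fin n) (Fin p) ℝ)
    (βstar : Fin p → ℝ) (σ : ℝ) (hσ : 0 < σ) (ε : Fin n → ℝ)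
    (hmodel : Y = X.mulVec βstar + σ • ε)
    (lam : ℝ) (hlam : 0 < lam)
    (hlam_ge : lam ≥ 2 * σ * (⨆ j, |Xᵀ.mulVec ε j|) / n)
    (βhat : Fin p → ℝ)
    (hmin : ∀ β : Fin p → ℝ,
      (∑ i, (Y i - X.mulVec βhat i) ^ 2) / n + lam * ∑ j, |βhat j|
        ≤ (∑ i, (Y i - X.mulVec β i) ^ 2) / n + lam * ∑ j, |β j|) :
    (∑ i, (X.mulVec βhat i - X.mulVec βstar i) ^ 2) / n
      ≤ 2 * lam * ∑ j, |βstar j| := by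
  have hn' : (0:ℝ) < n := by exact_mod_cast hn
  set v : Fin n → ℝ := fun i => X.mulVec βhat i - X.mulVec βstar i with hv
  set M : ℝ := ⨆ j, |Xᵀ.mulVec ε j| with hM
  have hMle : ∀ j, |Xᵀ.mulVec ε j| ≤ M := fun j =>
    le_ciSup (f := fun j => |Xᵀ.mulVec ε j|) (Set.Finite.bddAbove (Set.finite_range _)) j
  have hM0 : 0 ≤ M := le_trans (abs_nonneg _) (hMle ⟨0, hp⟩)
  have hY : ∀ i, Y i - X.mulVec βhat i = σ * ε i - v i := by
    intro i; simp [hmodel, hv]; ring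
  have hY' : ∀ i, Y i - X.mulVec βstar i = σ * ε i := by
    intro i; simp [hmodel]
  have hbasic := hmin βstar
  have hexp : ∑ i, (Y i - X.mulVec βhat i)^2
      = ∑ i, (σ * ε i)^2 - 2*σ*(∑ i, ε i * v i) + ∑ i, v i ^2 := by
    simp_rw [hY]
    rw [Finset.mul_sum, ← Finset.sum_sub_distrib, ← Finset.sum_add_distrib]
    apply Finset.sum_congr rfl; intro i _; ring
  have hexp' : ∑ i, (Y i - X.mulVec βstar i)^2 = ∑ i, (σ * ε i)^2 := by
    simp_rw [hY']
  have hcross : ∑ i, ε i * v i = ∑ j, (βhat j - βstar j) * Xᵀ.mulVec ε j := by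
    simp only [hv, Matrix.mulVec, dotProduct, Matrix.transpose_apply]
    calc ∑ x, ε x * (∑ j, X x j * βhat j - ∑ j, X x j * βstar j)
        = ∑ x, ∑ j, (βhat j - βstar j) * (X x j * ε x) := by
          apply Finset.sum_congr rfl; intro x _
          rw [← Finset.sum_sub_distrib, Finset.mul_sum]
          apply Finset.sum_congr rfl; intro j _; ring
      _ = ∑ j, ∑ x, (βhat j - βstar j) * (X x j * ε x) := Finset.sum_comm
      _ = ∑ j, (βhat j - βstar j) * ∑ x, X x j * ε x := by
          apply Finset.sum_congr rfl; intro j _; rw [Finset.mul_sum]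
  set A : ℝ := ∑ j, |βhat j| with hA
  set B : ℝ := ∑ j, |βstar j| with hB
  have hA0 : 0 ≤ A := Finset.sum_nonneg fun j _ => abs_nonneg _
  have hB0 : 0 ≤ B := Finset.sum_nonneg fun j _ => abs_nonneg _
  have hub : ∑ i, ε i * v i ≤ (A + B) * M := by
    rw [hcross]
    calc ∑ j, (βhat j - βstar j) * Xᵀ.mulVec ε j
        ≤ ∑ j, (|βhat j| + |βstar j|) * M := by
          apply Finset.sum_le_sum; intro j _
          calc (βhat j - βstar j) * Xᵀ.mulVec ε j
              ≤ |(βhat j - βstar j) * Xᵀ.mulVec ε j| := le_abs_self _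
            _ = |βhat j - βstar j| * |Xᵀ.mulVec ε j| := abs_mul _ _
            _ ≤ (|βhat j| + |βstar j|) * M :=
                mul_le_mul (abs_sub _ _) (hMle j) (abs_nonneg _) (by positivity)
      _ = (A + B) * M := by
          rw [← Finset.sum_mul, Finset.sum_add_distrib]
  have h2 : 2*σ*(∑ i, ε i * v i) ≤ 2*σ*((A + B)*M) :=
    mul_le_mul_of_nonneg_left hub (by positivity)
  have h3 : 2*σ*((A + B)*M) / n ≤ lam * (A + B) := by
    calc 2*σ*((A + B)*M) / n = (2*σ*M/n) * (A + B) := by ring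
      _ ≤ lam * (A + B) := mul_le_mul_of_nonneg_right hlam_ge (add_nonneg hA0 hB0)
  rw [hexp, hexp'] at hbasic
  have key : (∑ i, v i ^ 2) / n ≤ 2 * lam * B := by
    have e1 : (∑ i, (σ * ε i)^2 - 2*σ*(∑ i, ε i * v i) + ∑ i, v i ^2) / n
        = (∑ i, (σ * ε i)^2)/n - 2*σ*(∑ i, ε i * v i)/n + (∑ i, v i ^2)/n := by ring
    rw [e1] at hbasic
    linarith [div_le_div_of_nonneg_right h2 hn'.le]
  exact key
end

section
/- Let n, p be positive integers, Y ∈ ℝ^n, X ∈ ℝ^{n×p}, and γ > 0. Suppose β̂ ∈ ℝ^p is a global minimizer over ℝ^p of the Square-Root Lasso objective β ↦ ‖Y − Xβ‖₂/√n + γ‖β‖₁. Then β̂ is also a global minimizer over ℝ^p of the Lasso objective β ↦ ‖Y − Xβ‖₂²/n + λ‖β‖₁ with the tuning parameter λ = 2γ‖Y − Xβ̂‖₂/√n. -/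
open Matrix Finset

/-- Every Square-Root Lasso solution with tuning parameter `γ` is a Lasso solution
with tuning parameter `λ = 2γ‖Y − Xβ̂‖₂/√n`: there is a mapping from the Square-Root
Lasso tuning parameter path into the Lasso tuning parameter path. -/
theorem sqrt_lasso_is_lasso
    (n p : ℕ) (hn : 0 < n) (hp : 0 < p)
    (Y : Fin n → ℝ) (X : Matrix (Fin n) (Fin p) ℝ)
    (γ : ℝ) (hγ : 0 < γ)
    (βhat : Fin p → ℝ)
    (hmin : ∀ β : Fin p → ℝ,
      Real.sqrt (∑ i, (Y i - X.mulVec βhat i) ^ 2) / Real.sqrt n + γ * ∑ j, |βhat j|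
        ≤ Real.sqrt (∑ i, (Y i - X.mulVec β i) ^ 2) / Real.sqrt n + γ * ∑ j, |β j|) :
    ∀ β : Fin p → ℝ,
      (∑ i, (Y i - X.mulVec βhat i) ^ 2) / n
          + (2 * γ * Real.sqrt (∑ i, (Y i - X.mulVec βhat i) ^ 2) / Real.sqrt n)
            * ∑ j, |βhat j|
        ≤ (∑ i, (Y i - X.mulVec β i) ^ 2) / n
          + (2 * γ * Real.sqrt (∑ i, (Y i - X.mulVec βhat i) ^ 2) / Real.sqrt n)
            * ∑ j, |β j| := by
  intro β
  have hmb := hmin β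
  set a := Real.sqrt (∑ i, (Y i - X.mulVec βhat i) ^ 2) with ha_def
  set b := Real.sqrt (∑ i, (Y i - X.mulVec β i) ^ 2) with hb_def
  set s := Real.sqrt n with hs_def
  have hs : 0 < s := Real.sqrt_pos.mpr (by exact_mod_cast hn)
  have ha : 0 ≤ a := Real.sqrt_nonneg _
  have hb : 0 ≤ b := Real.sqrt_nonneg _
  have ha2 : a ^ 2 = ∑ i, (Y i - X.mulVec βhat i) ^ 2 := by
    rw [ha_def, Real.sq_sqrt]; positivity
  have hb2 : b ^ 2 = ∑ i, (Y i - X.mulVec β i) ^ 2 := by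
    rw [hb_def, Real.sq_sqrt]; positivity
  have hn2 : (n : ℝ) = s ^ 2 := by
    rw [hs_def, Real.sq_sqrt]; positivity
  rw [← ha2, ← hb2, hn2]
  have hmb' : a + γ * s * ∑ j, |βhat j| ≤ b + γ * s * ∑ j, |β j| := by
    have := mul_le_mul_of_nonneg_right hmb hs.le
    field_simp at this
    linarith
  have key : a ^ 2 + 2 * γ * a * s * ∑ j, |βhat j| ≤ b ^ 2 + 2 * γ * a * s * ∑ j, |β j| := by
    nlinarith [sq_nonneg (a - b), mul_le_mul_of_nonneg_left hmb' (by positivity : (0:ℝ) ≤ 2 * a)]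
  have e1 : a ^ 2 / s ^ 2 + (2 * γ * a / s) * ∑ j, |βhat j|
      = (a ^ 2 + 2 * γ * a * s * ∑ j, |βhat j|) / s ^ 2 := by
    field_simp
  have e2 : b ^ 2 / s ^ 2 + (2 * γ * a / s) * ∑ j, |β j|
      = (b ^ 2 + 2 * γ * a * s * ∑ j, |β j|) / s ^ 2 := by
    field_simp
  rw [e1, e2]
  gcongr
end

section
/- Let n, p be positive integers and q ≥ 2 an even integer, let Y ∈ ℝ^n, X ∈ ℝ^{n×p}, and let β ∈ ℝ^p be such that u := Xᵀ(Y − Xβ) ≠ 0. Define the smooth data-fitting term L̄(β) = ‖Y − Xβ‖₂² / ((1/2)‖Xᵀ(Y − Xβ)‖_q), where ‖a‖_q = (Σⱼ aⱼ^q)^{1/q} for even q. Then L̄ is differentiable at β with gradient ∇L̄(β) = 2‖Y − Xβ‖₂² · XᵀX u^{∘(q−1)} / ‖u‖_q^{q+1} − 4 Xᵀ(Y − Xβ) / ‖u‖_q, where u^{∘(q−1)} ∈ ℝ^p denotes the entrywise (q−1)-th power of u. -/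
/-!
Both `‖Y − Xb‖₂²` and `‖u(b)‖_q^q = Σⱼ (XᵀY − XᵀX b)ⱼ^q` are sums of powers of affine functions
of `b`, and the gradient of `b ↦ Σᵢ (c − Ab)ᵢ^k` is `−k Aᵀ (c − Aβ)^{∘(k−1)}`. Since `q` is even
and `u ≠ 0`, `‖u‖_q^q > 0`, so the chain rule applies to `t ↦ t^{1/q}` there, and the quotient
rule together with `‖u‖_q^q · ‖u‖_q = ‖u‖_q^{q+1}` gives the formula.
-/

open Matrix Finset

section GradientCalculus

variable {F : Type*} [NormedAddCommGroup F] [InnerProductSpace ℝ F] [CompleteSpace F]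
  {f g : F → ℝ} {f' g' x : F}

theorem hasGradientAt_inner_const (a x : F) : HasGradientAt (fun y => inner ℝ a y) a x := by
  rw [hasGradientAt_iff_hasFDerivAt]
  exact (InnerProductSpace.toDual ℝ F a).hasFDerivAt

theorem HasGradientAt.const_sub (c : ℝ) (hf : HasGradientAt f f' x) :
    HasGradientAt (fun y => c - f y) (-f') x := by
  rw [hasGradientAt_iff_hasFDerivAt] at *
  simpa using hf.const_sub c

theorem HasGradientAt.sum {ι : Type*} (s : Finset ι) {f : ι → F → ℝ} {f' : ι → F}
    (h : ∀ i ∈ s, HasGradientAt (f i) (f' i) x) :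
    HasGradientAt (fun y => ∑ i ∈ s, f i y) (∑ i ∈ s, f' i) x := by
  simp only [hasGradientAt_iff_hasFDerivAt, map_sum] at *
  exact HasFDerivAt.fun_sum h

theorem HasDerivAt.comp_hasGradientAt {φ : ℝ → ℝ} {φ' : ℝ} (hφ : HasDerivAt φ φ' (f x))
    (hf : HasGradientAt f f' x) : HasGradientAt (fun y => φ (f y)) (φ' • f') x := by
  rw [hasGradientAt_iff_hasFDerivAt] at *
  refine (hφ.comp_hasFDerivAt x hf).congr_fderiv ?_
  ext v
  simp

theorem HasGradientAt.div (hf : HasGradientAt f f' x) (hg : HasGradientAt g g' x)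
    (hx : g x ≠ 0) :
    HasGradientAt (fun y => f y / g y) ((g x)⁻¹ • f' - (f x / g x ^ 2) • g') x := by
  rw [hasGradientAt_iff_hasFDerivAt] at *
  refine (hf.fun_mul ((hasDerivAt_inv hx).comp_hasFDerivAt x hg)).congr_fderiv ?_
  ext v
  simp
  ring

end GradientCalculus

section Matrix

variable {ι κ : Type*} [Fintype ι]

theorem hasGradientAt_mulVec_apply (A : Matrix κ ι ℝ) (i : κ) (β : EuclideanSpace ℝ ι) :
    HasGradientAt (fun b : EuclideanSpace ℝ ι => (A *ᵥ b) i) (WithLp.toLp 2 (A i)) β := by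
  convert hasGradientAt_inner_const (WithLp.toLp 2 (A i)) β using 2 with b
  simp [mulVec, dotProduct, PiLp.inner_apply, mul_comm]

theorem hasGradientAt_sum_pow_sub_mulVec [Fintype κ] (A : Matrix κ ι ℝ) (c : κ → ℝ) (k : ℕ)
    (β : EuclideanSpace ℝ ι) :
    HasGradientAt (fun b : EuclideanSpace ℝ ι => ∑ i, (c i - (A *ᵥ b) i) ^ k)
      (WithLp.toLp 2 (-(k : ℝ) • Aᵀ *ᵥ fun i => (c i - (A *ᵥ β) i) ^ (k - 1))) β := by
  convert HasGradientAt.sum univ fun i _ => (hasDerivAt_pow k _).comp_hasGradientAt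
    ((hasGradientAt_mulVec_apply A i β).const_sub (c i)) using 1
  ext j
  simp [mulVec, dotProduct, mul_sum, mul_left_comm, mul_comm]

theorem sum_pow_pos_of_even {q : ℕ} (hq : Even q) {v : ι → ℝ} (hv : v ≠ 0) :
    0 < ∑ k, v k ^ q := by
  obtain ⟨k, hk⟩ := Function.ne_iff.mp hv
  exact sum_pos' (fun k _ => hq.pow_nonneg _) ⟨k, mem_univ k, hq.pow_pos hk⟩

end Matrix

theorem trex_smooth_gradient_general
    (n p q : ℕ) (hq2 : 2 ≤ q) (hq_even : Even q)
    (Y : Fin n → ℝ) (X : Matrix (Fin n) (Fin p) ℝ)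
    (β : EuclideanSpace ℝ (Fin p))
    (hu : Xᵀ.mulVec (Y - X.mulVec β) ≠ 0) :
    HasGradientAt
      (fun b : EuclideanSpace ℝ (Fin p) =>
        (∑ i, (Y i - X.mulVec b i) ^ 2) /
          ((1 / 2) * (∑ j, (Xᵀ.mulVec (Y - X.mulVec b) j) ^ q) ^ ((1 : ℝ) / q)))
      (WithLp.toLp 2 (fun j =>
          2 * (∑ i, (Y i - X.mulVec β i) ^ 2) *
              ((Xᵀ * X).mulVec
                (fun k => (Xᵀ.mulVec (Y - X.mulVec β) k) ^ (q - 1))) j /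
              ((∑ k, (Xᵀ.mulVec (Y - X.mulVec β) k) ^ q) ^ ((1 : ℝ) / q)) ^ (q + 1)
            - 4 * Xᵀ.mulVec (Y - X.mulVec β) j /
              ((∑ k, (Xᵀ.mulVec (Y - X.mulVec β) k) ^ q) ^ ((1 : ℝ) / q))) :
        EuclideanSpace ℝ (Fin p))
      β := by
  set u := Xᵀ *ᵥ (Y - X *ᵥ β)
  set G : EuclideanSpace ℝ (Fin p) → ℝ := fun b => ∑ j, (Xᵀ *ᵥ (Y - X *ᵥ b)) j ^ q
  have hGβ : G β = ∑ k, u k ^ q := rfl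
  have hG : 0 < G β := sum_pow_pos_of_even hq_even hu
  have hnum := hasGradientAt_sum_pow_sub_mulVec X Y 2 β
  have hinner : HasGradientAt G
      (WithLp.toLp 2 (-(q : ℝ) • (Xᵀ * X) *ᵥ fun k => u k ^ (q - 1))) β := by
    simpa [G, u, mulVec_sub, mulVec_mulVec] using
      hasGradientAt_sum_pow_sub_mulVec (Xᵀ * X) (Xᵀ *ᵥ Y) q β
  have hden := ((Real.hasDerivAt_rpow_const (p := 1 / q) (Or.inl hG.ne')).const_mul
    (1 / 2)).comp_hasGradientAt hinner
  convert hnum.div hden (by positivity) using 1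
  ext j
  have hres : (Xᵀ *ᵥ fun i => Y i - (X *ᵥ β) i) = u := rfl
  simp only [one_div, hGβ, hres, _root_.mul_inv_rev, Nat.cast_ofNat, Nat.add_one_sub_one,
    pow_one, neg_smul, WithLp.toLp_neg, WithLp.toLp_smul, smul_neg, sub_neg_eq_add,
    PiLp.add_apply, PiLp.neg_apply, PiLp.smul_apply, smul_eq_mul]
  rw [hGβ] at hG
  generalize ∑ i, (Y i - (X *ᵥ β) i) ^ 2 = N
  rw [Real.rpow_sub hG, Real.rpow_one]
  have hsq : ((∑ k, u k ^ q) ^ (q : ℝ)⁻¹) ^ q = ∑ k, u k ^ q :=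
    Real.rpow_inv_natCast_pow hG.le (by omega)
  have hs : 0 < (∑ k, u k ^ q) ^ (q : ℝ)⁻¹ := by positivity
  generalize (∑ k, u k ^ q) ^ (q : ℝ)⁻¹ = s at hsq hs ⊢
  rw [pow_succ, hsq]
  field_simp
  ring

/-- Gradient of the smooth TREX data-fitting term: for even `q ≥ 2` and
`u = Xᵀ(Y − Xβ) ≠ 0`, the map `b ↦ ‖Y − Xb‖₂² / ((1/2)‖Xᵀ(Y − Xb)‖_q)`
(with `‖a‖_q = (Σⱼ aⱼ^q)^{1/q}`) is differentiable at `β` with gradient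
`2‖Y − Xβ‖₂² · XᵀX u^{∘(q−1)} / ‖u‖_q^{q+1} − 4 Xᵀ(Y − Xβ) / ‖u‖_q`. -/
theorem trex_smooth_gradient
    (n p q : ℕ) (hn : 0 < n) (hp : 0 < p) (hq2 : 2 ≤ q) (hq_even : Even q)
    (Y : Fin n → ℝ) (X : Matrix (Fin n) (Fin p) ℝ)
    (β : EuclideanSpace ℝ (Fin p))
    (hu : Xᵀ.mulVec (Y - X.mulVec β) ≠ 0) :
    HasGradientAt
      (fun b : EuclideanSpace ℝ (Fin p) =>
        (∑ i, (Y i - X.mulVec b i) ^ 2) /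
          ((1 / 2) * (∑ j, (Xᵀ.mulVec (Y - X.mulVec b) j) ^ q) ^ ((1 : ℝ) / q)))
      (WithLp.toLp 2 (fun j =>
          2 * (∑ i, (Y i - X.mulVec β i) ^ 2) *
              ((Xᵀ * X).mulVec
                (fun k => (Xᵀ.mulVec (Y - X.mulVec β) k) ^ (q - 1))) j /
              ((∑ k, (Xᵀ.mulVec (Y - X.mulVec β) k) ^ q) ^ ((1 : ℝ) / q)) ^ (q + 1)
            - 4 * Xᵀ.mulVec (Y - X.mulVec β) j /
              ((∑ k, (Xᵀ.mulVec (Y - X.mulVec β) k) ^ q) ^ ((1 : ℝ) / q))) :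
        EuclideanSpace ℝ (Fin p))
      β :=
  trex_smooth_gradient_general n p q hq2 hq_even Y X β hu
end
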